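/- Composition of approximate routings (telescoping argument of the main routing theorem): let α > 0, ε ≥ 0, K ≥ 0, let m = |E|, and let T be a natural number with 2^T ≥ 2m. Suppose demands b_0, …, b_{T+1} ∈ ℝ^V and flows f_0, …, f_{T+1} ∈ ℝ^E satisfy: b_{i+1} = b_i − B f_i for 0 ≤ i ≤ T; B f_{T+1} = b_{T+1}; ‖C⁻¹ f_0‖_∞ + 2α‖R b_1‖_∞ ≤ (1 + ε)·K; ‖C⁻¹ f_i‖_∞ + 2α‖R b_{i+1}‖_∞ ≤ (3/2)·α·‖R b_i‖_∞ for 1 ≤ i ≤ T; ‖C⁻¹ f_{T+1}‖_∞ ≤ m·α·‖R b_{T+1}‖_∞; and ‖R b_{T+1}‖_∞ ≤ 2^{−T}·‖R b_1‖_∞. Then the flow f = f_0 + f_1 + ⋯ + f_{T+1} satisfies B f = b_0 and ‖C⁻¹ f‖_∞ ≤ (1 + ε)·K. -/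
import Mathlib

open Matrix

/-- `linf x` is the maximum absolute entry of the vector `x`, i.e. `‖x‖_∞`. -/
noncomputable def linf {ι : Type*} [Fintype ι] (x : ι → ℝ) : ℝ := ⨆ i, |x i|

/-- `l1 x` is the sum of absolute entries of the vector `x`, i.e. `‖x‖₁`. -/
def l1 {ι : Type*} [Fintype ι] (x : ι → ℝ) : ℝ := ∑ i, |x i|

/-- `opt B c b` is the minimum congestion `‖C⁻¹ f‖_∞` over flows `f` with `B f = b`,
where `C` is the diagonal matrix of capacities `c`. -/
noncomputable def opt {V E : Type*} [Fintype V] [Fintype E]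
    (B : Matrix V E ℝ) (c : E → ℝ) (b : V → ℝ) : ℝ :=
  sInf {t : ℝ | ∃ f : E → ℝ, B.mulVec f = b ∧ t = linf fun e => f e / c e}

/-- `R` is an `α`-congestion-approximator for `(B, C)`:
`‖R b‖_∞ ≤ opt(b) ≤ α · ‖R b‖_∞` for every `b` in the column space of `B`. -/
def IsCongestionApprox {V E W : Type*} [Fintype V] [Fintype E] [Fintype W]
    (B : Matrix V E ℝ) (c : E → ℝ) (α : ℝ) (R : Matrix W V ℝ) : Prop :=
  ∀ b : V → ℝ, (∃ f : E → ℝ, B.mulVec f = b) →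
    linf (R.mulVec b) ≤ opt B c b ∧ opt B c b ≤ α * linf (R.mulVec b)

lemma linf_nonneg {ι : Type*} [Fintype ι] (x : ι → ℝ) : 0 ≤ linf x := by
  unfold linf
  rcases isEmpty_or_nonempty ι with h | h
  · simp [Real.iSup_of_isEmpty]
  · exact le_ciSup_of_le (Set.Finite.bddAbove (Set.finite_range _)) (Classical.arbitrary ι)
      (abs_nonneg _)

lemma abs_le_linf {ι : Type*} [Fintype ι] (x : ι → ℝ) (i : ι) : |x i| ≤ linf x :=
  le_ciSup (f := fun j => |x j|) (Set.Finite.bddAbove (Set.finite_range _)) i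

lemma linf_le {ι : Type*} [Fintype ι] [Nonempty ι] {x : ι → ℝ} {t : ℝ}
    (h : ∀ i, |x i| ≤ t) : linf x ≤ t := ciSup_le h

lemma linf_sum_le {ι κ : Type*} [Fintype ι] [Nonempty ι] (s : Finset κ) (x : κ → ι → ℝ) :
    linf (fun i => ∑ k ∈ s, x k i) ≤ ∑ k ∈ s, linf (x k) := by
  apply linf_le
  intro i
  calc |∑ k ∈ s, x k i| ≤ ∑ k ∈ s, |x k i| := Finset.abs_sum_le_sum_abs _ _
    _ ≤ ∑ k ∈ s, linf (x k) := Finset.sum_le_sum fun k _ => abs_le_linf _ i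

/-- Composition of approximate routings (telescoping argument of the main routing
theorem): summing the flows `f_0, …, f_{T+1}` yields a flow routing `b_0` with
congestion at most `(1 + ε)·K`. -/
theorem composition_of_routings {V E W : Type*} [Fintype V] [Fintype E] [Fintype W]
    [Nonempty V] [Nonempty E]
    (B : Matrix V E ℝ) (c : E → ℝ) (hc : ∀ e, 0 < c e)
    (R : Matrix W V ℝ)
    (α : ℝ) (hα : 0 < α) (ε : ℝ) (hε : 0 ≤ ε) (K : ℝ) (hK : 0 ≤ K)
    (T : ℕ) (hT : 2 * Fintype.card E ≤ 2 ^ T)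
    (b : ℕ → V → ℝ) (f : ℕ → E → ℝ)
    (hrec : ∀ i ≤ T, b (i + 1) = b i - B.mulVec (f i))
    (hlast : B.mulVec (f (T + 1)) = b (T + 1))
    (h0 : linf (fun e => f 0 e / c e) + 2 * α * linf (R.mulVec (b 1)) ≤ (1 + ε) * K)
    (hmid : ∀ i, 1 ≤ i → i ≤ T →
      linf (fun e => f i e / c e) + 2 * α * linf (R.mulVec (b (i + 1))) ≤
        (3 / 2) * α * linf (R.mulVec (b i)))
    (hlast' : linf (fun e => f (T + 1) e / c e) ≤
      (Fintype.card E : ℝ) * α * linf (R.mulVec (b (T + 1))))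
    (hdecay : linf (R.mulVec (b (T + 1))) ≤ (2 : ℝ) ^ (-(T : ℤ)) * linf (R.mulVec (b 1))) :
    B.mulVec (∑ i ∈ Finset.range (T + 2), f i) = b 0 ∧
      linf (fun e => (∑ i ∈ Finset.range (T + 2), f i) e / c e) ≤ (1 + ε) * K := by
  -- abbreviations
  set L : ℕ → ℝ := fun i => linf (fun e => f i e / c e) with hL
  set S : ℕ → ℝ := fun i => linf (R.mulVec (b i)) with hS
  have hSnn : ∀ i, 0 ≤ S i := fun i => linf_nonneg _
  have hLnn : ∀ i, 0 ≤ L i := fun i => linf_nonneg _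
  -- T ≥ 1
  have hm1 : 1 ≤ Fintype.card E := Fintype.card_pos
  have hT1 : 1 ≤ T := by
    rcases Nat.eq_zero_or_pos T with h | h
    · subst h; simp at hT; omega
    · exact h
  -- Part 1: telescoping
  have hBf : ∀ i ≤ T, B.mulVec (f i) = b i - b (i + 1) := by
    intro i hi
    have := hrec i hi
    rw [this]; abel
  have part1 : B.mulVec (∑ i ∈ Finset.range (T + 2), f i) = b 0 := by
    have hlin : B.mulVec (∑ i ∈ Finset.range (T + 2), f i) =
        ∑ i ∈ Finset.range (T + 2), B.mulVec (f i) := by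
      funext v
      simp only [Matrix.mulVec, dotProduct, Finset.sum_apply, Finset.mul_sum]
      rw [Finset.sum_comm]
    rw [hlin, Finset.sum_range_succ]
    have : ∑ i ∈ Finset.range (T + 1), B.mulVec (f i) =
        ∑ i ∈ Finset.range (T + 1), (b i - b (i + 1)) := by
      apply Finset.sum_congr rfl
      intro i hi
      exact hBf i (Nat.lt_succ_iff.mp (Finset.mem_range.mp hi))
    rw [this, Finset.sum_range_sub' b, hlast]
    abel
  refine ⟨part1, ?_⟩
  -- Part 2: congestion bound
  -- key induction
  have key : ∀ t, 1 ≤ t → t ≤ T →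
      (∑ i ∈ Finset.range (t + 1), L i) + 2 * α * S (t + 1) + α / 2 * S 1 ≤ (1 + ε) * K := by
    intro t ht1 htT
    induction t with
    | zero => omega
    | succ n ih =>
      rcases Nat.eq_or_lt_of_le ht1 with h1 | h1
      · -- n = 0, i.e. t = 1
        have hn : n = 0 := by omega
        subst hn
        have hm := hmid 1 le_rfl (by omega)
        simp only [Finset.sum_range_succ, Finset.sum_range_one]
        have : L 1 + 2 * α * S 2 + α / 2 * S 1 ≤ 2 * α * S 1 := by
          have := hmid 1 le_rfl (by omega)
          nlinarith [hSnn 1]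
        nlinarith [h0, this]
      · -- n ≥ 1
        have hn1 : 1 ≤ n := by omega
        have ihn := ih hn1 (by omega)
        have hm := hmid (n + 1) (by omega) htT
        rw [Finset.sum_range_succ]
        have h32 : L (n + 1) + 2 * α * S (n + 2) ≤ 2 * α * S (n + 1) := by
          nlinarith [hSnn (n + 1)]
        nlinarith
  have hkeyT := key T hT1 le_rfl
  -- bound L (T+1)
  have hpow : (2 : ℝ) ^ (-(T : ℤ)) = ((2 : ℝ) ^ T)⁻¹ := by
    rw [_root_.zpow_neg, zpow_natCast]
  have h2T : (2 : ℝ) * (Fintype.card E : ℝ) ≤ 2 ^ T := by exact_mod_cast hT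
  have hhalf : (Fintype.card E : ℝ) * ((2 : ℝ) ^ T)⁻¹ ≤ 1 / 2 := by
    rw [mul_inv_le_iff₀ (by positivity : (0:ℝ) < 2 ^ T)]
    linarith
  have hLT1 : L (T + 1) ≤ α / 2 * S 1 := by
    have h1 : L (T + 1) ≤ (Fintype.card E : ℝ) * α * S (T + 1) := hlast'
    have h2 : S (T + 1) ≤ ((2 : ℝ) ^ T)⁻¹ * S 1 := by rw [← hpow]; exact hdecay
    calc L (T + 1) ≤ (Fintype.card E : ℝ) * α * S (T + 1) := h1
      _ ≤ (Fintype.card E : ℝ) * α * (((2 : ℝ) ^ T)⁻¹ * S 1) :=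
          mul_le_mul_of_nonneg_left h2 (by positivity)
      _ = α * ((Fintype.card E : ℝ) * ((2 : ℝ) ^ T)⁻¹ * S 1) := by ring
      _ ≤ α * (1 / 2 * S 1) :=
          mul_le_mul_of_nonneg_left (mul_le_mul_of_nonneg_right hhalf (hSnn 1)) hα.le
      _ = α / 2 * S 1 := by ring
  -- subadditivity
  have hsub : linf (fun e => (∑ i ∈ Finset.range (T + 2), f i) e / c e) ≤
      ∑ i ∈ Finset.range (T + 2), L i := by
    have heq : (fun e => (∑ i ∈ Finset.range (T + 2), f i) e / c e) =
        fun e => ∑ i ∈ Finset.range (T + 2), f i e / c e := by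
      funext e
      simp [Finset.sum_apply, Finset.sum_div]
    rw [heq]
    exact linf_sum_le _ _
  calc linf (fun e => (∑ i ∈ Finset.range (T + 2), f i) e / c e)
      ≤ ∑ i ∈ Finset.range (T + 2), L i := hsub
    _ = (∑ i ∈ Finset.range (T + 1), L i) + L (T + 1) := Finset.sum_range_succ L (T + 1)
    _ ≤ (1 + ε) * K := by nlinarith [hSnn (T + 1), hkeyT, hLT1]
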